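/- arXiv:2304.12843 — 3 statements merged into one kernel-verified Lean document; each statement's English description precedes it below -/
import Mathlib

section
/- (Gibbard–Satterthwaite) Suppose that 𝓡_i = 𝓡 (the universal domain of all strict linear orders on X) for every agent i ∈ N. Then there is no social choice rule f : 𝓓 → X that is strategy-proof, non-dictatorial, and whose range satisfies |r(f)| ≠ 2. -/
/-- A preference is represented by its strict relation `P`, where `P a b` means
`a` is strictly preferred to `b`. -/
abbrev Pref (X : Type*) := X → X → Prop

/-- The universal domain: all strict linear orders (strict total orders) on `X`. -/
def univDomain (X : Type*) : Set (Pref X) := {P | IsStrictTotalOrder X P}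

/-- `S(𝓑)`: the set of ordered pairs of distinct alternatives that are fixed
(ranked the same way) throughout the domain `𝓑`. -/
def fixedPairs {X : Type*} (B : Set (Pref X)) : Set (X × X) :=
  {p | p.1 ≠ p.2 ∧ ∀ P ∈ B, P p.1 p.2}

/-- A preference domain is non-conditional if it consists exactly of the strict
linear orders respecting all of its fixed pairs. -/
def NonConditional {X : Type*} (B : Set (Pref X)) : Prop :=
  B = {P | P ∈ univDomain X ∧ ∀ p ∈ fixedPairs B, P p.1 p.2}

/-- `{x, y} ∈ S⁻¹(𝓑)`: the unordered pair `{x, y}` is a free pair of `𝓑`. -/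
def FreePair {X : Type*} (B : Set (Pref X)) (x y : X) : Prop :=
  x ≠ y ∧ (x, y) ∉ fixedPairs B ∧ (y, x) ∉ fixedPairs B

/-- The profile `R` lies in the product domain `∏ i, 𝓡 i`. -/
def InDomain {N X : Type*} (𝓡 : N → Set (Pref X)) (R : N → Pref X) : Prop :=
  ∀ i, R i ∈ 𝓡 i

/-- The range `r(f)` of a social choice rule `f` over the domain `𝓡`. -/
def scrRange {N X : Type*} (𝓡 : N → Set (Pref X)) (f : (N → Pref X) → X) : Set X :=
  {x | ∃ R, InDomain 𝓡 R ∧ f R = x}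

/-- Strategy-proofness of `f` on the product domain `𝓡`: no agent `i` can, at any
profile of the domain, obtain a strictly preferred outcome by misreporting. -/
def StrategyProof {N X : Type*} [DecidableEq N] (𝓡 : N → Set (Pref X))
    (f : (N → Pref X) → X) : Prop :=
  ∀ R, InDomain 𝓡 R → ∀ i, ∀ P' ∈ 𝓡 i, ¬ R i (f (Function.update R i P')) (f R)

/-- `f` is a dictatorship of agent `i` on the domain `𝓡`: at every profile of the
domain, `f` selects an outcome weakly preferred by `i` to every element of the range. -/
def Dictatorship {N X : Type*} (𝓡 : N → Set (Pref X)) (f : (N → Pref X) → X)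
    (i : N) : Prop :=
  ∀ R, InDomain 𝓡 R → ∀ x ∈ scrRange 𝓡 f, f R = x ∨ R i (f R) x

/-- `f` is non-dictatorial on the domain `𝓡`. -/
def NonDictatorial {N X : Type*} (𝓡 : N → Set (Pref X)) (f : (N → Pref X) → X) : Prop :=
  ∀ i, ¬ Dictatorship 𝓡 f i

/-- The option set `O_i(R_{-i}, 𝓑)` of agent `i` at the subprofile `R_{-i}`
relative to the set of preferences `𝓑`. -/
def optionSet {N X : Type*} [DecidableEq N] (f : (N → Pref X) → X) (i : N)
    (R : N → Pref X) (B : Set (Pref X)) : Set X :=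
  {x | ∃ P ∈ B, f (Function.update R i P) = x}

/-
Strategy-proofness makes `f` monotonic (an alternative stays chosen when it only rises in every
ranking) and forces the outcome into any set of alternatives of the range that every agent ranks on
top. Hence declaring `a ≻ b` when `f` picks `a` after everybody lifts `{a, b}` to the top defines a
social welfare function on the range that is a strict total order, Paretian and independent of
irrelevant alternatives. With at least three alternatives in the range, Arrow's theorem (via
Geanakoplos's pivotal voter) yields a dictator, who is also a dictator for `f`; with at most one,
every agent is a dictator.
-/

open Function

section Preferences
variable {X : Type*}

/-- `toTop {b} P` and `toTop {b}ᶜ P` move `b` to the top and to the bottom of `P`. -/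
def toTop (S : Set X) (P : Pref X) : Pref X :=
  fun x y => x ∈ S ∧ y ∉ S ∨ (x ∈ S ↔ y ∈ S) ∧ P x y

variable {S T : Set X} {P : Pref X} {x y : X}

theorem toTop_of_mem_of_notMem (hx : x ∈ S) (hy : y ∉ S) : toTop S P x y := Or.inl ⟨hx, hy⟩

theorem not_toTop_of_notMem_of_mem (hx : x ∉ S) (hy : y ∈ S) : ¬ toTop S P x y := by
  unfold toTop; tauto

theorem toTop_iff_of_iff (h : x ∈ S ↔ y ∈ S) : toTop S P x y ↔ P x y := by
  unfold toTop; tauto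

theorem toTop_of_rel (hx : x ∈ S) (h : P x y) : toTop S P x y := by
  unfold toTop; tauto

theorem toTop_anti (hST : S ⊆ T) (hx : x ∈ S) (h : toTop T P x y) : toTop S P x y := by
  by_cases hy : y ∈ S
  · exact toTop_of_rel hx ((toTop_iff_of_iff (iff_of_true (hST hx) (hST hy))).1 h)
  · exact toTop_of_mem_of_notMem hx hy

theorem isStrictTotalOrder_toTop (hP : IsStrictTotalOrder X P) :
    IsStrictTotalOrder X (toTop S P) where
  trichotomous x y hxy hyx := by
    unfold toTop at hxy hyx
    exact hP.trichotomous x y (by tauto) (by tauto)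
  irrefl x := by unfold toTop; have := hP.irrefl x; tauto
  trans x y z := by unfold toTop; have := hP.trans x y z; tauto

theorem IsStrictTotalOrder.asymm (hP : IsStrictTotalOrder X P) (h : P x y) : ¬ P y x :=
  fun h' => hP.irrefl x (hP.trans x y x h h')

theorem IsStrictTotalOrder.rel_swap_iff (hP : IsStrictTotalOrder X P) (hxy : x ≠ y) :
    P y x ↔ ¬ P x y := by
  refine ⟨hP.asymm, fun h => ?_⟩
  have := hP
  rcases trichotomous_of P x y with h' | h' | h'
  exacts [absurd h' h, absurd h' hxy, h']

theorem rel_of_rel_of_agree {Q : Pref X} (hP : IsStrictTotalOrder X P)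
    (hQ : IsStrictTotalOrder X Q) (hPQ : P x y ↔ Q x y) {z w : X} (hz : z ∈ ({x, y} : Set X))
    (hw : w ∈ ({x, y} : Set X)) (h : P z w) : Q z w := by
  have hzw : z ≠ w := fun e => hP.irrefl z (e ▸ h)
  rcases hz with rfl | rfl <;> rcases hw with rfl | rfl
  · exact absurd rfl hzw
  · exact hPQ.1 h
  · exact (hQ.rel_swap_iff hzw.symm).2 fun h' => (hP.rel_swap_iff hzw.symm).1 h (hPQ.2 h')
  · exact absurd rfl hzw

end Preferences

theorem Set.exists_mem_ne_ne_of_two_lt_encard {α : Type*} {A : Set α} (hA : 2 < A.encard)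
    (x y : α) : ∃ c ∈ A, c ≠ x ∧ c ≠ y := by
  by_contra! h
  have hsub : A ⊆ {x, y} := fun c hc => by
    by_cases hcx : c = x
    exacts [Or.inl hcx, Or.inr (h c hc hcx)]
  have : A.encard ≤ 2 := calc
    A.encard ≤ ({x, y} : Set α).encard := Set.encard_le_encard hsub
    _ ≤ ({y} : Set α).encard + 1 := Set.encard_insert_le _ _
    _ = 2 := by rw [Set.encard_singleton]; rfl
  exact absurd hA (not_lt.2 this)

theorem Finset.exists_not_and_insert {ι : Type*} [DecidableEq ι] {p : Finset ι → Prop}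
    (h₀ : ¬ p ∅) {s : Finset ι} (hs : p s) : ∃ t, ∃ d ∉ t, ¬ p t ∧ p (insert d t) := by
  induction s using Finset.induction_on with
  | empty => exact absurd hs h₀
  | insert d t hd ih =>
    by_cases ht : p t
    exacts [ih ht, ⟨t, d, hd, ht, hs⟩]

theorem Finset.induction_piecewise {ι β : Type*} [Fintype ι] [DecidableEq ι]
    {p : (ι → β) → Prop} {g h : ι → β} (h₀ : p g)
    (step : ∀ s : Finset ι, ∀ i ∉ s, p (s.piecewise h g) → p (update (s.piecewise h g) i (h i))) :
    p h := by
  have key : ∀ s : Finset ι, p (s.piecewise h g) := by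
    intro s
    induction s using Finset.induction_on with
    | empty => simpa using h₀
    | insert i s hi ih => rw [Finset.piecewise_insert]; exact step s i hi ih
  simpa using key Finset.univ

section Arrow
variable {V α : Type*}

def IsLinearProfile (R : V → Pref α) : Prop := ∀ i, IsStrictTotalOrder α (R i)

theorem IsLinearProfile.update [DecidableEq V] {R : V → Pref α} (hR : IsLinearProfile R) {i : V}
    {P : Pref α} (hP : IsStrictTotalOrder α P) : IsLinearProfile (update R i P) :=
  (forall_update_iff R (p := fun _ Q => IsStrictTotalOrder α Q)).2 ⟨hP, fun j _ => hR j⟩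

theorem IsLinearProfile.piecewise [DecidableEq V] {R R' : V → Pref α} (hR : IsLinearProfile R)
    (hR' : IsLinearProfile R') (s : Finset V) : IsLinearProfile (s.piecewise R R') :=
  fun i => s.piecewise_cases R R' (IsStrictTotalOrder α) (hR i) (hR' i)

theorem isLinearProfile_toTop {R : V → Pref α} (hR : IsLinearProfile R) (S : Set α) :
    IsLinearProfile (fun i => toTop S (R i)) :=
  fun i => isStrictTotalOrder_toTop (hR i)

/-- Arrow's axioms for a social welfare function that only has to rank the alternatives of `A`. -/
structure ArrowConditions (A : Set α) (F : (V → Pref α) → Pref α) : Prop where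
  asymm : ∀ R, IsLinearProfile R → ∀ x ∈ A, ∀ y ∈ A, F R x y → ¬ F R y x
  trans : ∀ R, IsLinearProfile R → ∀ x ∈ A, ∀ y ∈ A, ∀ z ∈ A, F R x y → F R y z → F R x z
  total : ∀ R, IsLinearProfile R → ∀ x ∈ A, ∀ y ∈ A, x ≠ y → F R x y ∨ F R y x
  pareto : ∀ R, IsLinearProfile R → ∀ x ∈ A, ∀ y ∈ A, x ≠ y → (∀ i, R i x y) → F R x y
  iia : ∀ R R', IsLinearProfile R → IsLinearProfile R' → ∀ x ∈ A, ∀ y ∈ A,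
    (∀ i, R i x y ↔ R' i x y) → (F R x y ↔ F R' x y)

def IsTopOn (A : Set α) (P : Pref α) (b : α) : Prop := ∀ x ∈ A, x ≠ b → P b x

def IsBotOn (A : Set α) (P : Pref α) (b : α) : Prop := ∀ x ∈ A, x ≠ b → P x b

variable {A : Set α} {F : (V → Pref α) → Pref α} {R : V → Pref α} {a b c : α}

theorem exists_raise_keeping_extreme {P : Pref α} (hP : IsStrictTotalOrder α P)
    (hb : IsTopOn A P b ∨ IsBotOn A P b) (ha : a ∈ A) (hc : c ∈ A) (hab : a ≠ b) (hcb : c ≠ b)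
    (hac : a ≠ c) :
    ∃ Q, IsStrictTotalOrder α Q ∧ Q c a ∧ (Q a b ↔ P a b) ∧ (Q b c ↔ P b c) := by
  have hca : toTop {c} P c a := toTop_of_mem_of_notMem (Set.mem_singleton c) hac
  rcases hb with htop | hbot
  · refine ⟨toTop {b} (toTop {c} P), isStrictTotalOrder_toTop (isStrictTotalOrder_toTop hP),
      (toTop_iff_of_iff (S := {b}) (iff_of_false hcb hab)).2 hca, ?_, ?_⟩
    · exact iff_of_false (not_toTop_of_notMem_of_mem hab (Set.mem_singleton b))
        (hP.asymm (htop a ha hab))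
    · exact iff_of_true (toTop_of_mem_of_notMem (Set.mem_singleton b) hcb) (htop c hc hcb)
  · refine ⟨toTop {b}ᶜ (toTop {c} P), isStrictTotalOrder_toTop (isStrictTotalOrder_toTop hP),
      (toTop_iff_of_iff (S := {b}ᶜ) (iff_of_true hcb hab)).2 hca, ?_, ?_⟩
    · exact iff_of_true (toTop_of_mem_of_notMem (S := {b}ᶜ) hab (not_not.2 rfl)) (hbot a ha hab)
    · exact iff_of_false (not_toTop_of_notMem_of_mem (S := {b}ᶜ) (not_not.2 rfl) hcb)
        (hP.asymm (hbot c hc hcb))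

namespace ArrowConditions

/-- Otherwise `a ≻ b ≻ c` socially, and raising `c` above `a` for every voter while keeping `b`
extreme would leave `a ≻ c` by independence, against the Pareto condition. -/
theorem isTopOn_or_isBotOn (hF : ArrowConditions A F) (hR : IsLinearProfile R) (hb : b ∈ A)
    (hext : ∀ i, IsTopOn A (R i) b ∨ IsBotOn A (R i) b) :
    IsTopOn A (F R) b ∨ IsBotOn A (F R) b := by
  by_contra! h
  simp only [IsTopOn, IsBotOn, not_forall] at h
  obtain ⟨⟨a, ha, hab, hba⟩, ⟨c, hc, hcb, hcb'⟩⟩ := h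
  have hFab : F R a b := (hF.total R hR a ha b hb hab).resolve_right hba
  have hFbc : F R b c := (hF.total R hR b hb c hc hcb.symm).resolve_right hcb'
  have hac : a ≠ c := by rintro rfl; exact hF.asymm R hR a ha b hb hFab hFbc
  choose R' hR' hca hab' hbc' using fun i =>
    exists_raise_keeping_extreme (hR i) (hext i) ha hc hab hcb hac
  have hFac : F R' a c := hF.trans R' hR' a ha b hb c hc
    ((hF.iia R' R hR' hR a ha b hb hab').2 hFab) ((hF.iia R' R hR' hR b hb c hc hbc').2 hFbc)
  exact hF.asymm R' hR' a ha c hc hFac (hF.pareto R' hR' c hc a ha hac.symm hca)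

end ArrowConditions

variable [DecidableEq V] {s : Finset V} {d i : V} {x y : α}

noncomputable def splitProfile (b : α) (s : Finset V) : V → Pref α :=
  fun i => if i ∈ s then toTop {b} WellOrderingRel else toTop {b}ᶜ WellOrderingRel

theorem isLinearProfile_splitProfile (b : α) (s : Finset V) :
    IsLinearProfile (splitProfile b s) := fun i => by
  unfold splitProfile
  split_ifs <;> exact isStrictTotalOrder_toTop inferInstance

theorem splitProfile_of_mem (hi : i ∈ s) (hx : x ≠ b) : splitProfile b s i b x := by
  simpa [splitProfile, hi] using toTop_of_mem_of_notMem (Set.mem_singleton b) hx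

theorem splitProfile_of_notMem (hi : i ∉ s) (hx : x ≠ b) : splitProfile b s i x b := by
  simpa [splitProfile, hi] using toTop_of_mem_of_notMem (S := {b}ᶜ) hx (not_not.2 rfl)

theorem not_splitProfile_of_mem (hi : i ∈ s) (hx : x ≠ b) : ¬ splitProfile b s i x b :=
  (isLinearProfile_splitProfile b s i).asymm (splitProfile_of_mem hi hx)

theorem not_splitProfile_of_notMem (hi : i ∉ s) (hx : x ≠ b) : ¬ splitProfile b s i b x :=
  (isLinearProfile_splitProfile b s i).asymm (splitProfile_of_notMem hi hx)

def IsPivotal (A : Set α) (F : (V → Pref α) → Pref α) (b : α) (d : V) : Prop :=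
  ∃ s : Finset V, d ∉ s ∧ IsBotOn A (F (splitProfile b s)) b ∧
    IsTopOn A (F (splitProfile b (insert d s))) b

namespace ArrowConditions

theorem exists_isPivotal [Fintype V] (hF : ArrowConditions A F) (hb : b ∈ A)
    (hx : x ∈ A) (hxb : x ≠ b) : ∃ d, IsPivotal A F b d := by
  have hbot : IsBotOn A (F (splitProfile b ∅)) b := fun y hy hyb =>
    hF.pareto _ (isLinearProfile_splitProfile b ∅) y hy b hb hyb
      fun i => splitProfile_of_notMem (Finset.notMem_empty i) hyb
  have htop : IsTopOn A (F (splitProfile b Finset.univ)) b := fun y hy hyb =>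
    hF.pareto _ (isLinearProfile_splitProfile b _) b hb y hy hyb.symm
      fun i => splitProfile_of_mem (Finset.mem_univ i) hyb
  obtain ⟨s, d, hd, hs, hds⟩ := Finset.exists_not_and_insert
    (p := fun s => IsTopOn A (F (splitProfile b s)) b)
    (fun h => hF.asymm _ (isLinearProfile_splitProfile b ∅) x hx b hb (hbot x hx hxb) (h x hx hxb))
    htop
  have hext : ∀ i, IsTopOn A (splitProfile b s i) b ∨ IsBotOn A (splitProfile b s i) b := by
    intro i
    by_cases hi : i ∈ s
    exacts [Or.inl fun y _ hyb => splitProfile_of_mem hi hyb,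
      Or.inr fun y _ hyb => splitProfile_of_notMem hi hyb]
  exact ⟨d, s, hd,
    (hF.isTopOn_or_isBotOn (isLinearProfile_splitProfile b s) hb hext).resolve_left hs, hds⟩

end ArrowConditions

/-- Let the voters of `s` rank `b` first, `d` rank it between `x` and `y`, and the others rank it
last. -/
theorem exists_agree_splitProfile (hR : IsLinearProfile R) (hds : d ∉ s) (hxb : x ≠ b)
    (hyb : y ≠ b) (hxy : R d x y) (i : V) :
    ∃ Q, IsStrictTotalOrder α Q ∧ (Q x y ↔ R i x y) ∧ (Q x b ↔ splitProfile b s i x b) ∧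
      (Q b y ↔ splitProfile b (insert d s) i b y) := by
  have hne : x ≠ y := fun h => (hR d).irrefl x (h ▸ hxy)
  by_cases hi : i ∈ s
  · refine ⟨toTop {b} (R i), isStrictTotalOrder_toTop (hR i),
      toTop_iff_of_iff (S := {b}) (iff_of_false hxb hyb), ?_, ?_⟩
    · exact iff_of_false (not_toTop_of_notMem_of_mem hxb (Set.mem_singleton b))
        (not_splitProfile_of_mem hi hxb)
    · exact iff_of_true (toTop_of_mem_of_notMem (Set.mem_singleton b) hyb)
        (splitProfile_of_mem (Finset.mem_insert_of_mem hi) hyb)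
  by_cases hid : i = d
  · subst hid
    refine ⟨toTop {x} (toTop {x, b} (R i)),
      isStrictTotalOrder_toTop (isStrictTotalOrder_toTop (hR i)),
      iff_of_true (toTop_of_mem_of_notMem (Set.mem_singleton x) hne.symm) hxy,
      iff_of_true (toTop_of_mem_of_notMem (Set.mem_singleton x) hxb.symm)
        (splitProfile_of_notMem hi hxb), ?_⟩
    refine iff_of_true ((toTop_iff_of_iff (S := {x}) (iff_of_false hxb.symm hne.symm)).2 ?_)
      (splitProfile_of_mem (Finset.mem_insert_self i s) hyb)
    exact toTop_of_mem_of_notMem (by simp) (by simp [hne.symm, hyb])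
  · have hi' : i ∉ insert d s := by simp [hi, hid]
    refine ⟨toTop {b}ᶜ (R i), isStrictTotalOrder_toTop (hR i),
      toTop_iff_of_iff (S := {b}ᶜ) (iff_of_true hxb hyb), ?_, ?_⟩
    · exact iff_of_true (toTop_of_mem_of_notMem (S := {b}ᶜ) hxb (not_not.2 rfl))
        (splitProfile_of_notMem hi hxb)
    · exact iff_of_false (not_toTop_of_notMem_of_mem (S := {b}ᶜ) (not_not.2 rfl) hyb)
        (not_splitProfile_of_notMem hi' hyb)

/-- At the profile of `exists_agree_splitProfile`, independence gives `x ≻ b ≻ y` socially. -/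
theorem IsPivotal.rel (hF : ArrowConditions A F) (hb : b ∈ A) (hd : IsPivotal A F b d)
    (hR : IsLinearProfile R) (hx : x ∈ A) (hy : y ∈ A) (hxb : x ≠ b) (hyb : y ≠ b)
    (hxy : R d x y) : F R x y := by
  obtain ⟨s, hds, hbot, htop⟩ := hd
  choose R' hR' hxy' hxb' hby' using exists_agree_splitProfile hR hds hxb hyb hxy
  have hFxb : F R' x b :=
    (hF.iia R' _ hR' (isLinearProfile_splitProfile b s) x hx b hb hxb').2 (hbot x hx hxb)
  have hFby : F R' b y :=
    (hF.iia R' _ hR' (isLinearProfile_splitProfile b _) b hb y hy hby').2 (htop y hy hyb)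
  exact (hF.iia R' R hR' hR x hx y hy hxy').1 (hF.trans R' hR' x hx b hb y hy hFxb hFby)

/-- Otherwise the pivotal voter for `c`, who dictates the pair `{b, x}`, would contradict `b` being
last or first at `d`'s pivotal profiles. -/
theorem IsPivotal.eq (hF : ArrowConditions A F) {d' : V} (hd : IsPivotal A F b d)
    (hd' : IsPivotal A F c d') (hb : b ∈ A) (hc : c ∈ A) (hbc : b ≠ c) (hx : x ∈ A)
    (hxb : x ≠ b) (hxc : x ≠ c) : d' = d := by
  obtain ⟨s, hds, hbot, htop⟩ := hd
  by_contra hne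
  by_cases hs : d' ∈ s
  · exact hF.asymm _ (isLinearProfile_splitProfile b s) x hx b hb (hbot x hx hxb)
      (hd'.rel hF hc (isLinearProfile_splitProfile b s) hb hx hbc hxc (splitProfile_of_mem hs hxb))
  · have hs' : d' ∉ insert d s := by simp [hne, hs]
    exact hF.asymm _ (isLinearProfile_splitProfile b _) b hb x hx (htop x hx hxb)
      (hd'.rel hF hc (isLinearProfile_splitProfile b _) hx hb hxc hbc
        (splitProfile_of_notMem hs' hxb))

theorem ArrowConditions.exists_dictator [Fintype V] (hF : ArrowConditions A F)
    (hA : 2 < A.encard) :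
    ∃ d, ∀ R, IsLinearProfile R → ∀ x ∈ A, ∀ y ∈ A, R d x y → F R x y := by
  obtain ⟨b, hb⟩ := Set.encard_pos.1 (lt_trans two_pos hA)
  obtain ⟨x₀, hx₀, hx₀b, -⟩ := A.exists_mem_ne_ne_of_two_lt_encard hA b b
  obtain ⟨d, hd⟩ := hF.exists_isPivotal hb hx₀ hx₀b
  refine ⟨d, fun R hR x hx y hy hxy => ?_⟩
  obtain ⟨c, hc, hcx, hcy⟩ := A.exists_mem_ne_ne_of_two_lt_encard hA x y
  by_cases hcb : c = b
  · subst hcb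
    exact hd.rel hF hc hR hx hy hcx.symm hcy.symm hxy
  obtain ⟨z, hz, hzb, hzc⟩ := A.exists_mem_ne_ne_of_two_lt_encard hA b c
  obtain ⟨d', hd'⟩ := hF.exists_isPivotal hc hb (Ne.symm hcb)
  obtain rfl := hd.eq hF hd' hb hc (Ne.symm hcb) hz hzb hzc
  exact hd'.rel hF hc hR hx hy hcx.symm hcy.symm hxy

end Arrow

section GibbardSatterthwaite
variable {N X : Type*} [DecidableEq N] {f : (N → Pref X) → X} {R R' : N → Pref X}

abbrev unrestrictedDomain (N X : Type*) : N → Set (Pref X) := fun _ => univDomain X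

def inducedSWF (f : (N → Pref X) → X) : (N → Pref X) → Pref X :=
  fun R a b => a ≠ b ∧ f (fun i => toTop {a, b} (R i)) = a

namespace StrategyProof

theorem eq_or_rel_and_rel (hsp : StrategyProof (unrestrictedDomain N X) f)
    (hR : IsLinearProfile R) (i : N) {P : Pref X} (hP : IsStrictTotalOrder X P) :
    f (update R i P) = f R ∨ R i (f R) (f (update R i P)) ∧ P (f (update R i P)) (f R) := by
  have h₁ : ¬ R i (f (update R i P)) (f R) := hsp R hR i P hP
  have h₂ : ¬ P (f R) (f (update R i P)) := by
    simpa using hsp (update R i P) (hR.update hP) i (R i) (hR i)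
  by_cases h : f (update R i P) = f R
  · exact Or.inl h
  · exact Or.inr ⟨((hR i).rel_swap_iff h).2 h₁, (hP.rel_swap_iff (Ne.symm h)).2 h₂⟩

theorem eq_of_forall_rel_imp [Fintype N] (hsp : StrategyProof (unrestrictedDomain N X) f)
    (hR : IsLinearProfile R) (hR' : IsLinearProfile R') {x : X} (hx : f R = x)
    (hmono : ∀ i z, R i x z → R' i x z) : f R' = x := by
  refine Finset.induction_piecewise (p := fun H => f H = x) hx fun s i hi hs => ?_
  rcases hsp.eq_or_rel_and_rel (hR'.piecewise hR s) i (hR' i) with h | ⟨h₁, h₂⟩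
  · rw [h, hs]
  · rw [hs] at h₁ h₂
    rw [Finset.piecewise_eq_of_notMem _ _ _ hi] at h₁
    exact absurd h₂ ((hR' i).asymm (hmono i _ h₁))

theorem mem_of_forall_rel [Fintype N] (hsp : StrategyProof (unrestrictedDomain N X) f)
    (hR : IsLinearProfile R) {S : Set X} (hS : (S ∩ scrRange (unrestrictedDomain N X) f).Nonempty)
    (hRS : ∀ i, ∀ z ∈ S, ∀ w ∉ S, R i z w) : f R ∈ S := by
  obtain ⟨_, huS, R₀, hR₀, rfl⟩ := hS
  refine Finset.induction_piecewise (p := fun H => f H ∈ S) huS fun s i hi hs => ?_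
  rcases hsp.eq_or_rel_and_rel (hR.piecewise hR₀ s) i (hR i) with h | ⟨-, h₂⟩
  · rwa [h]
  · by_contra hS
    exact (hR i).asymm (hRS i _ hs _ hS) h₂

variable [Fintype N]

theorem apply_toTop_mem (hsp : StrategyProof (unrestrictedDomain N X) f)
    (hR : IsLinearProfile R) {S : Set X}
    (hS : (S ∩ scrRange (unrestrictedDomain N X) f).Nonempty) : f (fun i => toTop S (R i)) ∈ S :=
  hsp.mem_of_forall_rel (isLinearProfile_toTop hR S) hS fun _ _ hz _ hw =>
    toTop_of_mem_of_notMem hz hw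

theorem apply_toTop_of_mem (hsp : StrategyProof (unrestrictedDomain N X) f)
    (hR : IsLinearProfile R) {S : Set X} (h : f R ∈ S) :
    f (fun i => toTop S (R i)) = f R :=
  hsp.eq_of_forall_rel_imp hR (isLinearProfile_toTop hR S) rfl fun _ _ => toTop_of_rel h

theorem apply_toTop_of_subset (hsp : StrategyProof (unrestrictedDomain N X) f)
    (hR : IsLinearProfile R) {S T : Set X} (hST : S ⊆ T) {x : X}
    (hx : x ∈ S) (h : f (fun i => toTop T (R i)) = x) : f (fun i => toTop S (R i)) = x :=
  hsp.eq_of_forall_rel_imp (isLinearProfile_toTop hR T) (isLinearProfile_toTop hR S) h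
    fun _ _ => toTop_anti hST hx

theorem apply_toTop_pair_eq (hsp : StrategyProof (unrestrictedDomain N X) f)
    (hR : IsLinearProfile R) (hR' : IsLinearProfile R') {a b : X}
    (ha : a ∈ scrRange (unrestrictedDomain N X) f) (hab : ∀ i, R i a b ↔ R' i a b) :
    f (fun i => toTop {a, b} (R' i)) = f (fun i => toTop {a, b} (R i)) := by
  have hw := hsp.apply_toTop_mem hR (S := {a, b}) ⟨a, by simp, ha⟩
  refine hsp.eq_of_forall_rel_imp (isLinearProfile_toTop hR _) (isLinearProfile_toTop hR' _) rfl
    fun i z h => ?_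
  by_cases hz : z ∈ ({a, b} : Set X)
  · rw [toTop_iff_of_iff (iff_of_true hw hz)] at h ⊢
    exact rel_of_rel_of_agree (hR i) (hR' i) (hab i) hw hz h
  · exact toTop_of_mem_of_notMem hw hz

theorem arrowConditions_inducedSWF (hsp : StrategyProof (unrestrictedDomain N X) f) :
    ArrowConditions (scrRange (unrestrictedDomain N X) f) (inducedSWF f) where
  asymm R hR a ha b hb := by
    rintro ⟨hab, h⟩ ⟨-, h'⟩
    rw [Set.pair_comm] at h'
    exact hab (h.symm.trans h')
  trans R hR a ha b hb c hc := by
    rintro ⟨hab, hfab⟩ ⟨hbc, hfbc⟩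
    have hac : a ≠ c := by
      rintro rfl
      rw [Set.pair_comm] at hfbc
      exact hab (hfab.symm.trans hfbc)
    refine ⟨hac, ?_⟩
    rcases hsp.apply_toTop_mem hR (S := {a, b, c}) ⟨a, by simp, ha⟩ with hw | hw | hw
    · exact hsp.apply_toTop_of_subset hR (by simp [Set.insert_subset_iff]) (by simp) hw
    · have hb' := hsp.apply_toTop_of_subset hR (S := {a, b})
        (by simp [Set.insert_subset_iff]) (by simp) hw
      exact absurd (hfab.symm.trans hb') hab
    · have hc' := hsp.apply_toTop_of_subset hR (S := {b, c}) (by simp) (by simp) hw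
      exact absurd (hfbc.symm.trans hc') hbc
  total R hR a ha b hb hab := by
    rcases hsp.apply_toTop_mem hR (S := {a, b}) ⟨a, by simp, ha⟩ with h | h
    · exact Or.inl ⟨hab, h⟩
    · exact Or.inr ⟨hab.symm, by rwa [Set.pair_comm]⟩
  pareto R hR a ha b hb hab hall := by
    obtain ⟨R₀, hR₀, rfl⟩ := ha
    refine ⟨hab, hsp.eq_of_forall_rel_imp hR₀ (isLinearProfile_toTop hR _) rfl fun i z h => ?_⟩
    by_cases hz : z = b
    · subst hz
      exact (toTop_iff_of_iff (iff_of_true (by simp) (by simp))).2 (hall i)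
    · have hz' : z ≠ f R₀ := fun e => (hR₀ i).irrefl z (e ▸ h)
      exact toTop_of_mem_of_notMem (by simp) (by simp [hz, hz'])
  iia R R' hR hR' a ha b hb hab := by
    simp only [inducedSWF, hsp.apply_toTop_pair_eq hR hR' ha hab]

/-- If `f` chose some `y` that the Arrow dictator of `inducedSWF f` ranks below `x`, lifting
`{x, y}` to the top would keep `y` chosen, yet `x` beats `y` in `inducedSWF f`. -/
theorem exists_dictatorship (hsp : StrategyProof (unrestrictedDomain N X) f)
    (h : 2 < (scrRange (unrestrictedDomain N X) f).encard) :
    ∃ d, Dictatorship (unrestrictedDomain N X) f d := by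
  obtain ⟨d, hd⟩ := hsp.arrowConditions_inducedSWF.exists_dictator h
  refine ⟨d, fun R hR x hx => or_iff_not_imp_left.2 fun hne => ?_⟩
  refine ((hR d).rel_swap_iff (Ne.symm hne)).2 fun hxR => hne ?_
  exact (hsp.apply_toTop_of_mem hR (by simp)).symm.trans (hd R hR x hx (f R) ⟨R, hR, rfl⟩ hxR).2

end StrategyProof

end GibbardSatterthwaite

theorem dictatorship_of_encard_le_one {N X : Type*} {𝓡 : N → Set (Pref X)}
    {f : (N → Pref X) → X} (h : (scrRange 𝓡 f).encard ≤ 1) (i : N) : Dictatorship 𝓡 f i :=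
  fun R hR _ hx => Or.inl (Set.encard_le_one_iff.1 h _ _ ⟨R, hR, rfl⟩ hx)

theorem statement1_general {N X : Type*} [Fintype N] [Nonempty N] [DecidableEq N]
    (𝓡 : N → Set (Pref X)) (hU : ∀ i, 𝓡 i = univDomain X) :
    ¬ ∃ f : (N → Pref X) → X,
        StrategyProof 𝓡 f ∧ NonDictatorial 𝓡 f ∧ (scrRange 𝓡 f).ncard ≠ 2 := by
  rintro ⟨f, hsp, hnd, hcard⟩
  obtain rfl : 𝓡 = unrestrictedDomain N X := funext hU
  rcases lt_or_ge 2 (scrRange _ f).encard with h | h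
  · obtain ⟨d, hd⟩ := hsp.exists_dictatorship h
    exact hnd d hd
  · have h2 : (scrRange _ f).encard ≠ 2 := fun h2 =>
      hcard (Set.ncard_eq_two.2 (Set.encard_eq_two.1 h2))
    exact hnd (Classical.arbitrary N)
      (dictatorship_of_encard_le_one (Order.le_of_lt_succ (lt_of_le_of_ne h h2)) _)

theorem statement1 {N X : Type*} [Fintype N] [Nonempty N] [Fintype X] [DecidableEq N]
    (𝓡 : N → Set (Pref X)) (hU : ∀ i, 𝓡 i = univDomain X) :
    ¬ ∃ f : (N → Pref X) → X,
        StrategyProof 𝓡 f ∧ NonDictatorial 𝓡 f ∧ (scrRange 𝓡 f).ncard ≠ 2 :=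
  statement1_general 𝓡 hU
end

section
/- If a social choice rule f : 𝓓 → X is strategy-proof, then for every agent i ∈ N, every subprofile R_{-i} ∈ ∏_{j≠i} 𝓡_j, and all distinct alternatives x, y ∈ O_i(R_{-i}, 𝓡_i), the unordered pair {x, y} belongs to S^{-1}(𝓡_i), i.e., it is a free pair of 𝓡_i. -/
/-! Fixing the others' reports, agent `i` can obtain any element of the option set by reporting
a suitable preference, so strategy-proofness forbids a reported preference to rank any option above
the outcome it yields. Hence for distinct options `x`, `y`, a preference in `𝓡 i` yielding `y` does
not rank `x` above `y`, and one yielding `x` does not rank `y` above `x`: neither order is fixed. -/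

open Function

section

variable {N X : Type*} [DecidableEq N] {𝓡 : N → Set (Pref X)} {f : (N → Pref X) → X}
  {i : N} {R : N → Pref X} {P : Pref X} {a b : X}

theorem inDomain_update (hR : ∀ j, j ≠ i → R j ∈ 𝓡 j) (hP : P ∈ 𝓡 i) :
    InDomain 𝓡 (update R i P) := by
  intro j
  rcases eq_or_ne j i with rfl | hj
  · simpa using hP
  · simpa [update_of_ne hj] using hR j hj

theorem StrategyProof.not_prefers_mem_optionSet (hSP : StrategyProof 𝓡 f)
    (hR : ∀ j, j ≠ i → R j ∈ 𝓡 j) (hP : P ∈ 𝓡 i) (ha : a ∈ optionSet f i R (𝓡 i)) :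
    ¬ P a (f (update R i P)) := by
  obtain ⟨Pa, hPa, rfl⟩ := ha
  simpa using hSP _ (inDomain_update hR hP) i Pa hPa

theorem StrategyProof.not_mem_fixedPairs_of_mem_optionSet (hSP : StrategyProof 𝓡 f)
    (hR : ∀ j, j ≠ i → R j ∈ 𝓡 j) (ha : a ∈ optionSet f i R (𝓡 i))
    (hb : b ∈ optionSet f i R (𝓡 i)) : (a, b) ∉ fixedPairs (𝓡 i) := by
  obtain ⟨Pb, hPb, rfl⟩ := hb
  exact fun hfixed => hSP.not_prefers_mem_optionSet hR hPb ha (hfixed.2 Pb hPb)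

end

theorem statement4_general {N X : Type*} [DecidableEq N]
    (𝓡 : N → Set (Pref X))
    (f : (N → Pref X) → X) (hSP : StrategyProof 𝓡 f) :
    ∀ i : N, ∀ R : N → Pref X, (∀ j, j ≠ i → R j ∈ 𝓡 j) →
      ∀ x ∈ optionSet f i R (𝓡 i), ∀ y ∈ optionSet f i R (𝓡 i),
        x ≠ y → FreePair (𝓡 i) x y := by
  intro i R hR x hx y hy hxy
  exact ⟨hxy, hSP.not_mem_fixedPairs_of_mem_optionSet hR hx hy,
    hSP.not_mem_fixedPairs_of_mem_optionSet hR hy hx⟩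

theorem statement4 {N X : Type*} [Fintype N] [Nonempty N] [Fintype X] [DecidableEq N]
    (𝓡 : N → Set (Pref X)) (hsub : ∀ i, 𝓡 i ⊆ univDomain X)
    (f : (N → Pref X) → X) (hSP : StrategyProof 𝓡 f) :
    ∀ i : N, ∀ R : N → Pref X, (∀ j, j ≠ i → R j ∈ 𝓡 j) →
      ∀ x ∈ optionSet f i R (𝓡 i), ∀ y ∈ optionSet f i R (𝓡 i),
        x ≠ y → FreePair (𝓡 i) x y :=
  statement4_general 𝓡 f hSP
end

section
/- Under the induction setup, let f be a social choice rule on 𝓓 that is strategy-proof, non-dictatorial, and with |r(f)| ≠ 2, and let f' be its restriction to 𝓓'. If |r(f')| ≥ 2, then f' is not a dictatorship of any agent (neither of agent i nor of any agent j ≠ i). -/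
/-!
Moving `x` just above `y` in agent `i`'s preference takes a profile of `𝓓` into `𝓓'`, and by
strategy-proofness the move either keeps the outcome or turns an outcome lying between `y` and `x`
into `x`.

If `f'` is a dictatorship of `h ≠ i`: when the move never changes the outcome, `f` is a
dictatorship of `h`. Otherwise some profile has outcome `y` turned into `x`; then
`r(f) ⊆ r(f') ∪ {y}`, so `|r(f)| ≠ 2` yields a third alternative `c ∈ r(f')`, and `h` can manipulate
towards `c` or `y` depending on how it ranks `x` against `y`.

If `f'` is a dictatorship of `i`: again `r(f) ⊆ r(f') ∪ {y}`, with `x ∈ r(f')` and `y ∉ r(f')`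
(or else `f` is a dictatorship of `i`). Then `f` fails to be a dictatorship of `i` only because `y`
is in the option set of `i` at some profile and not at another. Changing the other agents'
preferences one at a time yields a pivotal agent `j ≠ i`, and `j` can manipulate.
-/

open Function Set

section

variable {N X : Type*}

namespace IsStrictTotalOrder

variable {P : Pref X} {a b : X}

lemma not_rel_of_rel (hP : IsStrictTotalOrder X P) (hab : P a b) : ¬ P b a :=
  fun hba => hP.irrefl a (hP.trans _ _ _ hab hba)

lemma rel_of_not_rel (hP : IsStrictTotalOrder X P) (hne : a ≠ b) (hab : ¬ P a b) : P b a := by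
  rcases hP.rel_or_eq_or_rel_swap (a := a) (b := b) with h | h | h
  exacts [absurd h hab, absurd h hne, h]

lemma eq_of_not_rel (hP : IsStrictTotalOrder X P) (hab : ¬ P a b) (hba : ¬ P b a) : a = b := by
  rcases hP.rel_or_eq_or_rel_swap (a := a) (b := b) with h | h | h
  exacts [absurd h hab, h, absurd h hba]

end IsStrictTotalOrder

lemma exists_isStrictTotalOrder_le (s : X → X → Prop) [IsStrictOrder X s] :
    ∃ W : Pref X, IsStrictTotalOrder X W ∧ s ≤ W := by
  let := partialOrderOfSO s
  exact ⟨fun a b => (toLinearExtension a : LinearExtension X) < toLinearExtension b,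
    inferInstanceAs (IsStrictTotalOrder (LinearExtension X) (· < ·)),
    fun _ _ hab => toLinearExtension.monotone.strictMono_of_injective (fun _ _ h => h) hab⟩

def liftAbove (s : X → X → Prop) (m : X) (A : Set X) : X → X → Prop := fun u v =>
  s u v ∨ ((u = m ∨ s u m) ∧ ∃ d ∈ A, d = v ∨ s d v)

lemma isStrictOrder_liftAbove {s : X → X → Prop} [IsStrictOrder X s] {m : X} {A : Set X}
    (hA : ∀ d ∈ A, ¬ (d = m ∨ s d m)) : IsStrictOrder X (liftAbove s m A) := by
  have le_trans : ∀ {a b c}, (a = b ∨ s a b) → (b = c ∨ s b c) → (a = c ∨ s a c) := by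
    rintro a b c (rfl | hab) (rfl | hbc)
    exacts [Or.inl rfl, Or.inr hbc, Or.inr hab, Or.inr (_root_.trans hab hbc)]
  refine { irrefl := ?_, trans := ?_ }
  · rintro u (h | ⟨hum, d, hd, hdu⟩)
    exacts [irrefl u h, hA d hd (le_trans hdu hum)]
  · rintro a b c (hab | ⟨ham, d, hd, hdb⟩) (hbc | ⟨hbm, e, he, hec⟩)
    · exact Or.inl (_root_.trans hab hbc)
    · exact Or.inr ⟨le_trans (Or.inr hab) hbm, e, he, hec⟩
    · exact Or.inr ⟨ham, d, hd, le_trans hdb (Or.inr hbc)⟩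
    · exact absurd (le_trans hdb hbm) (hA d hd)

lemma exists_isStrictTotalOrder_two_tops (s : X → X → Prop) [IsStrictOrder X s] {m₁ m₂ : X}
    {A₁ A₂ : Set X} (h₁ : ∀ d ∈ A₁ ∪ A₂, ¬ (d = m₁ ∨ s d m₁)) (h₂ : ∀ d ∈ A₂, ¬ (d = m₂ ∨ s d m₂)) :
    ∃ W : Pref X, IsStrictTotalOrder X W ∧ s ≤ W ∧ (∀ d ∈ A₁, W m₁ d) ∧ ∀ d ∈ A₂, W m₂ d := by
  have := isStrictOrder_liftAbove h₂
  have h₁' : ∀ d ∈ A₁, ¬ (d = m₁ ∨ liftAbove s m₂ A₂ d m₁) := by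
    rintro d hd (hdm | hdm | ⟨-, e, he, hem⟩)
    exacts [h₁ d (Or.inl hd) (Or.inl hdm), h₁ d (Or.inl hd) (Or.inr hdm), h₁ e (Or.inr he) hem]
  have := isStrictOrder_liftAbove h₁'
  obtain ⟨W, hW, hle⟩ := exists_isStrictTotalOrder_le (liftAbove (liftAbove s m₂ A₂) m₁ A₁)
  refine ⟨W, hW, fun a b hab => hle a b (Or.inl (Or.inl hab)), fun d hd => ?_, fun d hd => ?_⟩
  · exact hle _ _ (Or.inr ⟨Or.inl rfl, d, hd, Or.inl rfl⟩)
  · exact hle _ _ (Or.inl (Or.inr ⟨Or.inl rfl, d, hd, Or.inl rfl⟩))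

section NonConditional

variable {B : Set (Pref X)} {P : Pref X} {a b : X}

lemma NonConditional.mem_iff (hB : NonConditional B) :
    P ∈ B ↔ IsStrictTotalOrder X P ∧ ∀ p ∈ fixedPairs B, P p.1 p.2 := by
  conv_lhs => rw [hB]
  rfl

lemma NonConditional.isStrictTotalOrder (hB : NonConditional B) (hP : P ∈ B) :
    IsStrictTotalOrder X P :=
  (hB.mem_iff.1 hP).1

lemma NonConditional.ne_and_notMem_fixedPairs (hB : NonConditional B) (hP : P ∈ B) (hab : P a b) :
    b ≠ a ∧ (b, a) ∉ fixedPairs B :=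
  ⟨fun h => (hB.isStrictTotalOrder hP).irrefl a (h ▸ hab),
    fun h => (hB.isStrictTotalOrder hP).not_rel_of_rel hab (h.2 P hP)⟩

lemma NonConditional.isStrictOrder_fixedPairs (hB : NonConditional B) (hne : B.Nonempty) :
    IsStrictOrder X (fun a b => (a, b) ∈ fixedPairs B) := by
  obtain ⟨P₀, hP₀⟩ := hne
  refine { irrefl := fun a h => h.1 rfl, trans := fun a b c hab hbc => ⟨?_, fun P hP => ?_⟩ }
  · rintro (rfl : a = c)
    exact (hB.isStrictTotalOrder hP₀).not_rel_of_rel (hab.2 P₀ hP₀) (hbc.2 P₀ hP₀)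
  · exact (hB.isStrictTotalOrder hP).trans _ _ _ (hab.2 P hP) (hbc.2 P hP)

lemma NonConditional.exists_two_tops (hB : NonConditional B) (hne : B.Nonempty) {m₁ m₂ : X}
    {A₁ A₂ : Set X} (h₁ : ∀ d ∈ A₁ ∪ A₂, d ≠ m₁ ∧ (d, m₁) ∉ fixedPairs B)
    (h₂ : ∀ d ∈ A₂, d ≠ m₂ ∧ (d, m₂) ∉ fixedPairs B) :
    ∃ W ∈ B, (∀ d ∈ A₁, W m₁ d) ∧ ∀ d ∈ A₂, W m₂ d := by
  have := hB.isStrictOrder_fixedPairs hne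
  obtain ⟨W, hW, hle, hW₁, hW₂⟩ := exists_isStrictTotalOrder_two_tops
    (fun a b => (a, b) ∈ fixedPairs B) (fun d hd => not_or.2 (h₁ d hd))
    (fun d hd => not_or.2 (h₂ d hd))
  exact ⟨W, hB.mem_iff.2 ⟨hW, fun p hp => hle _ _ hp⟩, hW₁, hW₂⟩

end NonConditional

section Rules

variable {𝓡 : N → Set (Pref X)} {f : (N → Pref X) → X} {R R' : N → Pref X} {k h : N}
  {P : Pref X} {B : Set (Pref X)}

lemma mem_scrRange (hR : InDomain 𝓡 R) : f R ∈ scrRange 𝓡 f := ⟨R, hR, rfl⟩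

lemma Dictatorship.eq_of_forall_rel (hD : Dictatorship 𝓡 f h) (hNC : NonConditional (𝓡 h))
    (hR : InDomain 𝓡 R) {c : X} (hc : c ∈ scrRange 𝓡 f)
    (htop : ∀ w ∈ scrRange 𝓡 f, c = w ∨ R h c w) : f R = c := by
  refine (hD R hR c hc).resolve_right fun hfc => ?_
  rcases htop _ (mem_scrRange hR) with hcf | hcf
  · exact (hNC.isStrictTotalOrder (hR h)).irrefl c (hcf ▸ hfc)
  · exact (hNC.isStrictTotalOrder (hR h)).not_rel_of_rel hfc hcf

lemma Dictatorship.apply_eq_of_apply_eq (hD : Dictatorship 𝓡 f h) (hNC : NonConditional (𝓡 h))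
    (hR : InDomain 𝓡 R) (hR' : InDomain 𝓡 R') (hh : R h = R' h) : f R = f R' :=
  hD.eq_of_forall_rel hNC hR (mem_scrRange hR') (hh ▸ hD R' hR')

lemma Dictatorship.exists_top (hD : Dictatorship 𝓡 f h) {c : X} (hc : c ∈ scrRange 𝓡 f) :
    ∃ P ∈ 𝓡 h, ∀ w ∈ scrRange 𝓡 f, c = w ∨ P c w := by
  obtain ⟨R, hR, rfl⟩ := hc
  exact ⟨R h, hR h, hD R hR⟩

variable [DecidableEq N]

lemma InDomain.update (hR : InDomain 𝓡 R) (hP : P ∈ 𝓡 k) : InDomain 𝓡 (update R k P) := by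
  intro j
  rcases eq_or_ne j k with rfl | hj
  · simpa using hP
  · simpa [hj] using hR j

@[simp]
lemma optionSet_update : optionSet f k (update R k P) B = optionSet f k R B := by
  simp [optionSet]

lemma apply_mem_optionSet (h : R k ∈ B) : f R ∈ optionSet f k R B :=
  ⟨R k, h, by rw [update_eq_self]⟩

lemma StrategyProof.not_rel_of_mem_optionSet (hSP : StrategyProof 𝓡 f) (hR : InDomain 𝓡 R)
    {c : X} (hc : c ∈ optionSet f k R (𝓡 k)) : ¬ R k c (f R) := by
  obtain ⟨P', hP', rfl⟩ := hc
  exact hSP R hR k P' hP'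

lemma exists_pivot [Fintype N]
    {p : (N → Pref X) → Prop} {R R' : N → Pref X} (hR : InDomain 𝓡 R) (hR' : InDomain 𝓡 R')
    (hp : p R') (hnp : ¬ p R) : ∃ T, InDomain 𝓡 T ∧ ∃ j, p T ∧ ¬ p (update T j (R j)) := by
  by_contra! hall
  have key : ∀ s : Finset N, InDomain 𝓡 (s.piecewise R R') ∧ p (s.piecewise R R') := by
    intro s
    induction s using Finset.induction_on with
    | empty => simpa using ⟨hR', hp⟩
    | insert j s _ ih =>
      rw [Finset.piecewise_insert]
      exact ⟨ih.1.update (hR j), hall _ ih.1 j ih.2⟩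
  exact hnp (by simpa using (key Finset.univ).2)

end Rules

section MoveJustAbove

open scoped Classical in
/-- `x` takes the place of `y` and wins the tie with it (`false < true`). -/
noncomputable def moveJustAboveKey (x y u : X) : X × Bool :=
  (if u = x then y else u, decide (u ≠ x))

def moveJustAbove (P : Pref X) (x y : X) : Pref X :=
  InvImage (Prod.Lex P (· < ·)) (moveJustAboveKey x y)

variable {P : Pref X} {x y u v : X}

lemma moveJustAboveKey_injective : Injective (moveJustAboveKey x y) := by
  intro u v huv
  by_cases hu : u = x <;> by_cases hv : v = x <;> simp_all [moveJustAboveKey]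

lemma moveJustAbove_of_ne (hu : u ≠ x) (hv : v ≠ x) : moveJustAbove P x y u v ↔ P u v := by
  simp [moveJustAbove, moveJustAboveKey, InvImage, Prod.lex_iff, hu, hv]

lemma moveJustAbove_left (hv : v ≠ x) : moveJustAbove P x y x v ↔ P y v ∨ y = v := by
  simp [moveJustAbove, moveJustAboveKey, InvImage, Prod.lex_iff, hv]

lemma moveJustAbove_right (hu : u ≠ x) : moveJustAbove P x y u x ↔ P u y := by
  simp [moveJustAbove, moveJustAboveKey, InvImage, Prod.lex_iff, hu]

lemma isStrictTotalOrder_moveJustAbove (hP : IsStrictTotalOrder X P) :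
    IsStrictTotalOrder X (moveJustAbove P x y) := by
  have : IsStrictTotalOrder (X × Bool) (Prod.Lex P (· < ·)) := {}
  exact { trichotomous := (InvImage.trichotomous moveJustAboveKey_injective).trichotomous
          irrefl := fun _ => irrefl (r := Prod.Lex P (· < ·)) _
          trans := fun _ _ _ => _root_.trans (r := Prod.Lex P (· < ·)) }

end MoveJustAbove

structure InductionStep (i : N) (𝓡 𝓡' : N → Set (Pref X)) (x y : X) : Prop where
  agree : ∀ j, j ≠ i → 𝓡' j = 𝓡 j
  nonConditional : ∀ j, NonConditional (𝓡 j)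
  nonConditional' : NonConditional (𝓡' i)
  mem_fixedPairs : (x, y) ∈ fixedPairs (𝓡' i)
  fixedPairs_eq : fixedPairs (𝓡 i) = fixedPairs (𝓡' i) \ {(x, y)}
  nonempty : (𝓡' i).Nonempty

def moveAt [DecidableEq N] (i : N) (x y : X) (R : N → Pref X) : N → Pref X :=
  update R i (moveJustAbove (R i) x y)

namespace InductionStep

variable {i : N} {𝓡 𝓡' : N → Set (Pref X)} {x y : X} {P : Pref X} {R : N → Pref X}
  {f : (N → Pref X) → X}

lemma ne (H : InductionStep i 𝓡 𝓡' x y) : x ≠ y := H.mem_fixedPairs.1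

lemma isStrictTotalOrder (H : InductionStep i 𝓡 𝓡' x y) (j : N) (hP : P ∈ 𝓡 j) :
    IsStrictTotalOrder X P :=
  (H.nonConditional j).isStrictTotalOrder hP

lemma subset (H : InductionStep i 𝓡 𝓡' x y) (j : N) : 𝓡' j ⊆ 𝓡 j := by
  rcases eq_or_ne j i with rfl | hj
  · intro P hP
    refine (H.nonConditional j).mem_iff.2 ⟨H.nonConditional'.isStrictTotalOrder hP, fun p hp => ?_⟩
    rw [H.fixedPairs_eq] at hp
    exact hp.1.2 P hP
  · rw [H.agree j hj]

lemma inDomain_of_inDomain' (H : InductionStep i 𝓡 𝓡' x y) (hR : InDomain 𝓡' R) :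
    InDomain 𝓡 R :=
  fun j => H.subset j (hR j)

lemma scrRange_subset (H : InductionStep i 𝓡 𝓡' x y) : scrRange 𝓡' f ⊆ scrRange 𝓡 f := by
  rintro _ ⟨R, hR, rfl⟩
  exact mem_scrRange (H.inDomain_of_inDomain' hR)

lemma nonConditional'' (H : InductionStep i 𝓡 𝓡' x y) (j : N) : NonConditional (𝓡' j) := by
  rcases eq_or_ne j i with rfl | hj
  · exact H.nonConditional'
  · rw [H.agree j hj]
    exact H.nonConditional j

lemma mem'_of_rel (H : InductionStep i 𝓡 𝓡' x y) (hP : P ∈ 𝓡 i) (hxy : P x y) : P ∈ 𝓡' i := by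
  refine H.nonConditional'.mem_iff.2 ⟨H.isStrictTotalOrder i hP, fun p hp => ?_⟩
  by_cases hpxy : p = (x, y)
  · exact hpxy ▸ hxy
  · exact (H.fixedPairs_eq ▸ ⟨hp, hpxy⟩ : p ∈ fixedPairs (𝓡 i)).2 P hP

lemma inDomain'_of_rel (H : InductionStep i 𝓡 𝓡' x y) (hR : InDomain 𝓡 R) (hxy : R i x y) :
    InDomain 𝓡' R := by
  intro j
  rcases eq_or_ne j i with rfl | hj
  · exact H.mem'_of_rel (hR j) hxy
  · rw [H.agree j hj]
    exact hR j

lemma rel_of_not_rel (H : InductionStep i 𝓡 𝓡' x y) (hP : P ∈ 𝓡 i) (hxy : ¬ P x y) : P y x :=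
  (H.isStrictTotalOrder i hP).rel_of_not_rel H.ne hxy

lemma moveJustAbove_mem (H : InductionStep i 𝓡 𝓡' x y) (hP : P ∈ 𝓡 i) (hyx : P y x) :
    moveJustAbove P x y ∈ 𝓡' i := by
  have hPsto := H.isStrictTotalOrder i hP
  refine H.nonConditional'.mem_iff.2 ⟨isStrictTotalOrder_moveJustAbove hPsto, ?_⟩
  rintro ⟨u, v⟩ huv
  by_cases hxy : (u, v) = (x, y)
  · obtain ⟨rfl, rfl⟩ := Prod.mk.inj hxy
    exact (moveJustAbove_left H.ne.symm).2 (Or.inr rfl)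
  have huv' : (u, v) ∈ fixedPairs (𝓡 i) := H.fixedPairs_eq ▸ ⟨huv, hxy⟩
  rcases eq_or_ne u x with rfl | hux
  · exact (moveJustAbove_left huv.1.symm).2 (Or.inl (hPsto.trans _ _ _ hyx (huv'.2 P hP)))
  rcases eq_or_ne v x with rfl | hvx
  · have huy : (u, y) ∈ fixedPairs (𝓡 i) := H.fixedPairs_eq ▸
      ⟨(H.nonConditional'.isStrictOrder_fixedPairs H.nonempty).trans _ _ _ huv H.mem_fixedPairs,
        fun h => hux (Prod.mk.inj h).1⟩
    exact (moveJustAbove_right hux).2 (huy.2 P hP)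
  · exact (moveJustAbove_of_ne hux hvx).2 (huv'.2 P hP)

lemma y_notMem_scrRange_of_x_mem (H : InductionStep i 𝓡 𝓡' x y) (hD : Dictatorship 𝓡' f i)
    (hx : x ∈ scrRange 𝓡' f) : y ∉ scrRange 𝓡' f := fun hy => by
  obtain ⟨P, hP, htop⟩ := hD.exists_top hy
  exact (H.nonConditional'.isStrictTotalOrder hP).not_rel_of_rel (H.mem_fixedPairs.2 P hP)
    ((htop x hx).resolve_left H.ne.symm)

variable [DecidableEq N]

lemma inDomain'_moveAt (H : InductionStep i 𝓡 𝓡' x y) (hR : InDomain 𝓡 R) (hyx : R i y x) :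
    InDomain 𝓡' (moveAt i x y R) := by
  intro j
  rcases eq_or_ne j i with rfl | hj
  · simpa [moveAt] using H.moveJustAbove_mem (hR j) hyx
  · simpa [moveAt, hj, H.agree j hj] using hR j

lemma eq_or_apply_moveAt_eq (H : InductionStep i 𝓡 𝓡' x y) (hSP : StrategyProof 𝓡 f)
    (hR : InDomain 𝓡 R) (hyx : R i y x) :
    f R = f (moveAt i x y R) ∨
      f (moveAt i x y R) = x ∧ (R i y (f R) ∨ y = f R) ∧ R i (f R) x := by
  set Q := moveJustAbove (R i) x y
  have hPsto := H.isStrictTotalOrder i (hR i)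
  have hQsto : IsStrictTotalOrder X Q := isStrictTotalOrder_moveJustAbove hPsto
  have hQ : Q ∈ 𝓡 i := H.subset i (H.moveJustAbove_mem (hR i) hyx)
  have hRQ : InDomain 𝓡 (moveAt i x y R) := hR.update hQ
  have hSP₁ : ¬ R i (f (moveAt i x y R)) (f R) := hSP R hR i Q hQ
  have hSP₂ : ¬ Q (f R) (f (moveAt i x y R)) := by
    simpa [moveAt] using hSP _ hRQ i (R i) (hR i)
  by_cases hab : f R = f (moveAt i x y R)
  · exact Or.inl hab
  right
  have hab' : R i (f R) (f (moveAt i x y R)) := hPsto.rel_of_not_rel (Ne.symm hab) hSP₁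
  have hba : Q (f (moveAt i x y R)) (f R) := hQsto.rel_of_not_rel hab hSP₂
  rcases eq_or_ne (f (moveAt i x y R)) x with hbx | hbx
  · rw [hbx] at hab' hba
    exact ⟨hbx, (moveJustAbove_left fun h => hab (h.trans hbx.symm)).1 hba, hab'⟩
  rcases eq_or_ne (f R) x with hax | hax
  · rw [hax] at hab' hba
    exact absurd (hPsto.trans _ _ _ hyx hab')
      (hPsto.not_rel_of_rel ((moveJustAbove_right hbx).1 hba))
  · exact absurd ((moveJustAbove_of_ne hbx hax).1 hba) (hPsto.not_rel_of_rel hab')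

lemma exists_not_rel_apply_moveAt (H : InductionStep i 𝓡 𝓡' x y) (hSP : StrategyProof 𝓡 f)
    (hR : InDomain 𝓡 R) (hyf : R i y (f R)) (hfx : R i (f R) x) {A : Set X} (hxA : x ∈ A)
    (hA : ∀ d ∈ A, R i (f R) d) :
    ∃ W ∈ 𝓡 i, (∀ d ∈ A, W y d) ∧ ¬ W y (f (moveAt i x y (update R i W))) := by
  have hNC := H.nonConditional i
  have hPsto := hNC.isStrictTotalOrder (hR i)
  -- `(y, f R)` fixed in `𝓡 i` would make `(x, f R)` fixed, against `f R` above `x`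
  have hya : (y, f R) ∉ fixedPairs (𝓡 i) := fun hya => by
    have hxa : (x, f R) ∈ fixedPairs (𝓡' i) :=
      (H.nonConditional'.isStrictOrder_fixedPairs H.nonempty).trans _ _ _ H.mem_fixedPairs
        (H.fixedPairs_eq ▸ hya).1
    have hxa' : (x, f R) ∈ fixedPairs (𝓡 i) := H.fixedPairs_eq ▸
      ⟨hxa, fun h => (hNC.ne_and_notMem_fixedPairs (hR i) hyf).1 (Prod.mk.inj h).2⟩
    exact hPsto.not_rel_of_rel hfx (hxa'.2 _ (hR i))
  obtain ⟨W, hW, hWa, hWy⟩ := hNC.exists_two_tops ⟨R i, hR i⟩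
    (m₁ := f R) (A₁ := {y}) (m₂ := y) (A₂ := A)
    (by
      rintro d (rfl | hd)
      · exact ⟨(hNC.ne_and_notMem_fixedPairs (hR i) hyf).1.symm, hya⟩
      · exact hNC.ne_and_notMem_fixedPairs (hR i) (hA d hd))
    (fun d hd => hNC.ne_and_notMem_fixedPairs (hR i)
      (hPsto.trans _ _ _ hyf (hA d hd)))
  have hWsto := H.isStrictTotalOrder i hW
  have hay : W (f R) y := hWa y rfl
  have hR' : InDomain 𝓡 (update R i W) := hR.update hW
  have hnot : ¬ W (f R) (f (update R i W)) := by
    simpa using hSP.not_rel_of_mem_optionSet hR' (k := i) (c := f R)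
      (by simpa using apply_mem_optionSet (f := f) (hR i))
  refine ⟨W, hW, hWy, fun hyb => ?_⟩
  rcases H.eq_or_apply_moveAt_eq hSP hR' (by simpa using hWy x hxA) with heq | ⟨-, hyb', -⟩
  · exact hnot (hWsto.trans _ _ _ hay (heq ▸ hyb))
  · rw [update_self] at hyb'
    rcases hyb' with hyb' | hyb'
    · exact hnot (hWsto.trans _ _ _ hay hyb')
    · exact hnot (hyb' ▸ hay)

variable {h : N}

lemma eq_moveAt_or_eq_of_dictatorship (H : InductionStep i 𝓡 𝓡' x y) (hSP : StrategyProof 𝓡 f)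
    (hD : Dictatorship 𝓡' f h) (hhi : h ≠ i) (hR : InDomain 𝓡 R) (hyx : R i y x) :
    f R = f (moveAt i x y R) ∨ f R = y := by
  rcases H.eq_or_apply_moveAt_eq hSP hR hyx with heq | ⟨hx, hy, hfx⟩
  · exact Or.inl heq
  refine Or.inr (by_contra fun hne => ?_)
  obtain ⟨W, hW, hWx, hnot⟩ := H.exists_not_rel_apply_moveAt hSP hR
    (hy.resolve_right (Ne.symm hne)) hfx (mem_singleton x) (by simpa using hfx)
  -- agent `h`, the dictator of `f'`, has the same preference in both moved profiles
  have : f (moveAt i x y (update R i W)) = x := (hD.apply_eq_of_apply_eq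
    (H.nonConditional'' h) (H.inDomain'_moveAt (hR.update hW) (by simpa using hWx x rfl))
    (H.inDomain'_moveAt hR hyx) (by simp [moveAt, hhi])).trans hx
  exact hnot (by rw [this]; exact hWx x rfl)

lemma dictatorship_of_forall_eq_moveAt (H : InductionStep i 𝓡 𝓡' x y)
    (hD : Dictatorship 𝓡' f h) (hhi : h ≠ i)
    (hall : ∀ R, InDomain 𝓡 R → R i y x → f R = f (moveAt i x y R)) : Dictatorship 𝓡 f h := by
  have hrep : ∀ R, InDomain 𝓡 R → ∃ R', InDomain 𝓡' R' ∧ R' h = R h ∧ f R' = f R := by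
    intro R hR
    by_cases hxy : R i x y
    · exact ⟨R, H.inDomain'_of_rel hR hxy, rfl, rfl⟩
    · have hyx := H.rel_of_not_rel (hR i) hxy
      exact ⟨_, H.inDomain'_moveAt hR hyx, by simp [moveAt, hhi], (hall R hR hyx).symm⟩
  intro R hR w ⟨Rw, hRw, hw⟩
  obtain ⟨R', hR', hh, hfR⟩ := hrep R hR
  obtain ⟨Rw', hRw', -, hfRw⟩ := hrep Rw hRw
  simpa only [hh, hfR] using hD R' hR' w ⟨Rw', hRw', hfRw.trans hw⟩

lemma apply_update_eq_of_top (H : InductionStep i 𝓡 𝓡' x y) (hSP : StrategyProof 𝓡 f)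
    (hD : Dictatorship 𝓡' f h) (hhi : h ≠ i) (hR : InDomain 𝓡 R) (hyx : R i y x) {P : Pref X}
    (hP : P ∈ 𝓡 h) {c : X} (hc : c ∈ scrRange 𝓡' f) (hcx : c ≠ x)
    (htop : ∀ w ∈ scrRange 𝓡' f, c = w ∨ P c w) : f (update R h P) = c := by
  have hR' : InDomain 𝓡 (update R h P) := hR.update hP
  have hyx' : update R h P i y x := by rwa [update_of_ne hhi.symm]
  have hmove : f (moveAt i x y (update R h P)) = c :=
    hD.eq_of_forall_rel (H.nonConditional'' h) (H.inDomain'_moveAt hR' hyx') hc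
      (by simpa [moveAt, hhi] using htop)
  rcases H.eq_or_apply_moveAt_eq hSP hR' hyx' with heq | ⟨hx, -⟩
  · exact heq.trans hmove
  · exact absurd (hmove.symm.trans hx) hcx

lemma mem_optionSet_of_ne (H : InductionStep i 𝓡 𝓡' x y) (hSP : StrategyProof 𝓡 f)
    (hD : Dictatorship 𝓡' f h) (hhi : h ≠ i) (hR : InDomain 𝓡 R) (hyx : R i y x) {c : X}
    (hc : c ∈ scrRange 𝓡' f) (hcx : c ≠ x) : c ∈ optionSet f h R (𝓡 h) := by
  obtain ⟨P, hP, htop⟩ := hD.exists_top hc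
  rw [H.agree h hhi] at hP
  exact ⟨P, hP, H.apply_update_eq_of_top hSP hD hhi hR hyx hP hc hcx htop⟩

lemma rel_of_apply_moveAt_eq_x (H : InductionStep i 𝓡 𝓡' x y) (hD : Dictatorship 𝓡' f h)
    (hhi : h ≠ i) (hR : InDomain 𝓡 R) (hyx : R i y x) (hfx : f (moveAt i x y R) = x) :
    ∀ w ∈ scrRange 𝓡' f, x = w ∨ R h x w := by
  have := hD _ (H.inDomain'_moveAt hR hyx)
  rw [hfx] at this
  simpa [moveAt, hhi] using this

/-- Reporting `x` over `r(f')` and `c` over `y` would leave agent `h` with `y` although `c` is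
available. -/
lemma false_of_rel (H : InductionStep i 𝓡 𝓡' x y) (hSP : StrategyProof 𝓡 f)
    (hD : Dictatorship 𝓡' f h) (hhi : h ≠ i) (hR : InDomain 𝓡 R) (hyx : R i y x) (hfy : f R = y)
    (hfx : f (moveAt i x y R) = x) (hxy : R h x y) {c : X} (hc : c ∈ scrRange 𝓡' f) (hcx : c ≠ x)
    (hcy : c ≠ y) : False := by
  have hNC := H.nonConditional h
  obtain ⟨Pc, hPc, htop⟩ := hD.exists_top hc
  rw [H.agree h hhi] at hPc
  have hcy' : Pc c y := by
    refine (hNC.isStrictTotalOrder hPc).rel_of_not_rel hcy.symm ?_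
    simpa [H.apply_update_eq_of_top hSP hD hhi hR hyx hPc hc hcx htop] using
      hSP.not_rel_of_mem_optionSet (hR.update hPc) (k := h)
        (by simpa [hfy] using apply_mem_optionSet (f := f) (hR h))
  have hxtop := H.rel_of_apply_moveAt_eq_x hD hhi hR hyx hfx
  obtain ⟨Pd, hPd, hPdx, hPdc⟩ := hNC.exists_two_tops ⟨R h, hR h⟩ (m₁ := x)
    (A₁ := scrRange 𝓡' f \ {x}) (m₂ := c) (A₂ := {y})
    (by
      rintro d ((⟨hd, hdx⟩ : d ∈ scrRange 𝓡' f ∧ d ≠ x) | rfl)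
      · exact hNC.ne_and_notMem_fixedPairs (hR h) ((hxtop d hd).resolve_left hdx.symm)
      · exact hNC.ne_and_notMem_fixedPairs (hR h) hxy)
    (by rintro d rfl; exact hNC.ne_and_notMem_fixedPairs hPc hcy')
  have hR' : InDomain 𝓡 (update R h Pd) := hR.update hPd
  have hyx' : update R h Pd i y x := by rwa [update_of_ne hhi.symm]
  have hfd : f (update R h Pd) = y := by
    refine (H.eq_moveAt_or_eq_of_dictatorship hSP hD hhi hR' hyx').resolve_left fun heq => ?_
    have hfdx : f (update R h Pd) = x := heq.trans <| hD.eq_of_forall_rel (H.nonConditional'' h)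
      (H.inDomain'_moveAt hR' hyx') ⟨_, H.inDomain'_moveAt hR hyx, hfx⟩ fun w hw => by
        rcases eq_or_ne x w with hxw | hxw
        · exact Or.inl hxw
        · simpa [moveAt, hhi] using Or.inr (hPdx w ⟨hw, hxw.symm⟩)
    refine hSP.not_rel_of_mem_optionSet hR (k := h) ⟨Pd, hPd, hfdx⟩ ?_
    rwa [hfy]
  refine hSP.not_rel_of_mem_optionSet hR' (k := h) (c := c) ?_ ?_
  · rw [optionSet_update]
    exact H.mem_optionSet_of_ne hSP hD hhi hR hyx hc hcx
  · simpa [hfd] using hPdc y rfl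

/-- Reporting `y` over `c` over `r(f')` would leave agent `h` with `c` although `y` is available. -/
lemma false_of_not_rel (H : InductionStep i 𝓡 𝓡' x y) (hSP : StrategyProof 𝓡 f)
    (hD : Dictatorship 𝓡' f h) (hhi : h ≠ i) (hR : InDomain 𝓡 R) (hyx : R i y x) (hfy : f R = y)
    (hfx : f (moveAt i x y R) = x) (hxy : ¬ R h x y) {c : X} (hc : c ∈ scrRange 𝓡' f)
    (hcx : c ≠ x) : False := by
  have hNC := H.nonConditional h
  have hRsto := hNC.isStrictTotalOrder (hR h)
  have hxtop := H.rel_of_apply_moveAt_eq_x hD hhi hR hyx hfx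
  have hyw : ∀ w ∈ scrRange 𝓡' f, R h y w := by
    intro w hw
    rcases eq_or_ne w x with rfl | hwx
    · exact hRsto.rel_of_not_rel H.ne hxy
    have hwy : w ≠ y := by
      rintro rfl
      exact hxy ((hxtop w hw).resolve_left hwx.symm)
    refine hRsto.rel_of_not_rel hwy ?_
    rw [← hfy]
    exact hSP.not_rel_of_mem_optionSet hR (H.mem_optionSet_of_ne hSP hD hhi hR hyx hw hwx)
  obtain ⟨Pc, hPc, htop⟩ := hD.exists_top hc
  rw [H.agree h hhi] at hPc
  obtain ⟨P, hP, hPy, hPc⟩ := hNC.exists_two_tops ⟨R h, hR h⟩ (m₁ := y) (A₁ := {c}) (m₂ := c)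
    (A₂ := scrRange 𝓡' f \ {c})
    (by
      rintro d (rfl | ⟨hd, -⟩)
      exacts [hNC.ne_and_notMem_fixedPairs (hR h) (hyw d hc),
        hNC.ne_and_notMem_fixedPairs (hR h) (hyw d hd)])
    (fun d ⟨hd, hdc⟩ => hNC.ne_and_notMem_fixedPairs hPc ((htop d hd).resolve_left (Ne.symm hdc)))
  have hfP : f (update R h P) = c := by
    refine H.apply_update_eq_of_top hSP hD hhi hR hyx hP hc hcx fun w hw => ?_
    rcases eq_or_ne c w with hcw | hcw
    exacts [Or.inl hcw, Or.inr (hPc w ⟨hw, hcw.symm⟩)]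
  refine hSP.not_rel_of_mem_optionSet (hR.update hP) (k := h) (c := y) ?_ ?_
  · simpa [hfy] using apply_mem_optionSet (f := f) (hR h)
  · simpa [hfP] using hPy c rfl

lemma scrRange_subset_insert (H : InductionStep i 𝓡 𝓡' x y) (hSP : StrategyProof 𝓡 f)
    (hD : Dictatorship 𝓡' f h) (hhi : h ≠ i) : scrRange 𝓡 f ⊆ insert y (scrRange 𝓡' f) := by
  rintro _ ⟨R, hR, rfl⟩
  by_cases hxy : R i x y
  · exact Or.inr (mem_scrRange (H.inDomain'_of_rel hR hxy))
  have hyx := H.rel_of_not_rel (hR i) hxy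
  rcases H.eq_moveAt_or_eq_of_dictatorship hSP hD hhi hR hyx with heq | heq
  · exact Or.inr (heq ▸ mem_scrRange (H.inDomain'_moveAt hR hyx))
  · exact Or.inl heq

lemma not_dictatorship_of_ne [Fintype X] (H : InductionStep i 𝓡 𝓡' x y)
    (hSP : StrategyProof 𝓡 f) (hND : NonDictatorial 𝓡 f) (hcard : (scrRange 𝓡 f).ncard ≠ 2)
    (hcard' : 2 ≤ (scrRange 𝓡' f).ncard) (hhi : h ≠ i) : ¬ Dictatorship 𝓡' f h := by
  intro hD
  by_cases hall : ∀ R, InDomain 𝓡 R → R i y x → f R = f (moveAt i x y R)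
  · exact hND h (H.dictatorship_of_forall_eq_moveAt hD hhi hall)
  push Not at hall
  obtain ⟨R, hR, hyx, hne⟩ := hall
  have hfy : f R = y := (H.eq_moveAt_or_eq_of_dictatorship hSP hD hhi hR hyx).resolve_left hne
  have hfx : f (moveAt i x y R) = x := ((H.eq_or_apply_moveAt_eq hSP hR hyx).resolve_left hne).1
  obtain ⟨c, hc, hcx, hcy⟩ : ∃ c ∈ scrRange 𝓡' f, c ≠ x ∧ c ≠ y := by
    by_contra! hxy
    have hsub : scrRange 𝓡 f ⊆ {x, y} := (H.scrRange_subset_insert hSP hD hhi).trans <|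
      insert_subset (Or.inr rfl) fun c hc => (eq_or_ne c x).imp id (hxy c hc)
    exact hcard (le_antisymm ((ncard_le_ncard hsub).trans (ncard_pair H.ne).le)
      (hcard'.trans (ncard_le_ncard H.scrRange_subset)))
  by_cases hxy : R h x y
  · exact H.false_of_rel hSP hD hhi hR hyx hfy hfx hxy hc hcx hcy
  · exact H.false_of_not_rel hSP hD hhi hR hyx hfy hfx hxy hc hcx

variable {T : N → Pref X}

lemma mem_optionSet_of_dictatorship (H : InductionStep i 𝓡 𝓡' x y) (hD : Dictatorship 𝓡' f i)
    (hR : InDomain 𝓡 R) {c : X} (hc : c ∈ scrRange 𝓡' f) : c ∈ optionSet f i R (𝓡 i) := by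
  obtain ⟨P, hP, htop⟩ := hD.exists_top hc
  have hR' : InDomain 𝓡' (update R i P) := by
    intro j
    rcases eq_or_ne j i with rfl | hj
    · simpa using hP
    · simpa [hj, H.agree j hj] using hR j
  exact ⟨P, H.subset i hP, hD.eq_of_forall_rel H.nonConditional' hR' hc (by simpa using htop)⟩

lemma not_rel_of_dictatorship (H : InductionStep i 𝓡 𝓡' x y) (hSP : StrategyProof 𝓡 f)
    (hD : Dictatorship 𝓡' f i) (hR : InDomain 𝓡 R) {c : X} (hc : c ∈ scrRange 𝓡' f) :
    ¬ R i c (f R) :=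
  hSP.not_rel_of_mem_optionSet hR (H.mem_optionSet_of_dictatorship hD hR hc)

lemma dictatorship_of_x_notMem (H : InductionStep i 𝓡 𝓡' x y) (hSP : StrategyProof 𝓡 f)
    (hD : Dictatorship 𝓡' f i) (hx : x ∉ scrRange 𝓡' f) : Dictatorship 𝓡 f i := by
  rintro R hR _ ⟨Rw, hRw, rfl⟩
  have hw : f Rw ∈ scrRange 𝓡' f := by
    by_cases hxy : Rw i x y
    · exact mem_scrRange (H.inDomain'_of_rel hRw hxy)
    have hyx := H.rel_of_not_rel (hRw i) hxy
    rcases H.eq_or_apply_moveAt_eq hSP hRw hyx with heq | ⟨hfx, -⟩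
    · exact heq ▸ mem_scrRange (H.inDomain'_moveAt hRw hyx)
    · exact absurd (hfx ▸ mem_scrRange (H.inDomain'_moveAt hRw hyx)) hx
  rcases eq_or_ne (f R) (f Rw) with heq | hne
  · exact Or.inl heq
  · exact Or.inr ((H.isStrictTotalOrder i (hR i)).rel_of_not_rel hne.symm
      (H.not_rel_of_dictatorship hSP hD hR hw))

lemma mem_or_eq_of_dictatorship (H : InductionStep i 𝓡 𝓡' x y) (hSP : StrategyProof 𝓡 f)
    (hD : Dictatorship 𝓡' f i) (hR : InDomain 𝓡 R) : f R ∈ scrRange 𝓡' f ∨ f R = y := by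
  by_cases hxy : R i x y
  · exact Or.inl (mem_scrRange (H.inDomain'_of_rel hR hxy))
  have hyx := H.rel_of_not_rel (hR i) hxy
  rcases H.eq_or_apply_moveAt_eq hSP hR hyx with heq | ⟨-, hyf, hfx⟩
  · exact Or.inl (heq ▸ mem_scrRange (H.inDomain'_moveAt hR hyx))
  refine hyf.elim (fun hyf => ?_) fun hyf => Or.inr hyf.symm
  by_contra! hf
  have hA : ∀ d ∈ insert x (scrRange 𝓡' f), R i (f R) d := by
    rintro d (rfl | hd)
    · exact hfx
    · exact (H.isStrictTotalOrder i (hR i)).rel_of_not_rel (fun h => hf.1 (h ▸ hd))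
        (H.not_rel_of_dictatorship hSP hD hR hd)
  obtain ⟨W, hW, hWy, hnot⟩ := H.exists_not_rel_apply_moveAt hSP hR hyf hfx (mem_insert x _) hA
  exact hnot (hWy _ (Or.inr (mem_scrRange (H.inDomain'_moveAt (hR.update hW)
    (by simpa using hWy x (mem_insert x _))))))

lemma exists_y_mem_optionSet_notMem (H : InductionStep i 𝓡 𝓡' x y) (hSP : StrategyProof 𝓡 f)
    (hD : Dictatorship 𝓡' f i) (hND : ¬ Dictatorship 𝓡 f i) :
    ∃ R R', InDomain 𝓡 R ∧ InDomain 𝓡 R' ∧ y ∈ optionSet f i R' (𝓡 i) ∧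
      y ∉ optionSet f i R (𝓡 i) := by
  simp only [Dictatorship, not_forall, not_or] at hND
  obtain ⟨R, hR, _, ⟨R', hR', rfl⟩, hne, hnot⟩ := hND
  have hRsto := H.isStrictTotalOrder i (hR i)
  have hfR' : f R' = y := (H.mem_or_eq_of_dictatorship hSP hD hR').resolve_left fun hm =>
    hnot (hRsto.rel_of_not_rel (Ne.symm hne) (H.not_rel_of_dictatorship hSP hD hR hm))
  refine ⟨R, R', hR, hR', hfR' ▸ apply_mem_optionSet (hR' i), fun hy => hne ?_⟩
  rw [hfR']
  exact hRsto.eq_of_not_rel (hfR' ▸ hnot) (hSP.not_rel_of_mem_optionSet hR hy)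

lemma apply_update_eq_y_of_mem_optionSet (H : InductionStep i 𝓡 𝓡' x y) (hSP : StrategyProof 𝓡 f)
    (hD : Dictatorship 𝓡' f i) (hT : InDomain 𝓡 T) (hyT : y ∈ optionSet f i T (𝓡 i))
    {W : Pref X} (hW : W ∈ 𝓡 i) (hWy : ∀ w ∈ scrRange 𝓡' f, W y w) : f (update T i W) = y := by
  refine (H.mem_or_eq_of_dictatorship hSP hD (hT.update hW)).resolve_left fun hm => ?_
  exact hSP.not_rel_of_mem_optionSet (hT.update hW) (by rwa [optionSet_update])
    (by simpa using hWy _ hm)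

lemma apply_update_eq_of_notMem_optionSet (H : InductionStep i 𝓡 𝓡' x y) (hSP : StrategyProof 𝓡 f)
    (hD : Dictatorship 𝓡' f i) (hT : InDomain 𝓡 T) (hyT : y ∉ optionSet f i T (𝓡 i))
    {W : Pref X} (hW : W ∈ 𝓡 i) {c : X} (hc : c ∈ scrRange 𝓡' f)
    (htop : ∀ w ∈ scrRange 𝓡' f, c = w ∨ W c w) : f (update T i W) = c := by
  have hm : f (update T i W) ∈ scrRange 𝓡' f :=
    (H.mem_or_eq_of_dictatorship hSP hD (hT.update hW)).resolve_right fun hy =>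
      hyT (hy ▸ ⟨W, hW, rfl⟩)
  refine ((htop _ hm).resolve_right fun hcf => ?_).symm
  exact H.not_rel_of_dictatorship hSP hD (hT.update hW) hc (by simpa using hcf)

lemma exists_y_above_top (H : InductionStep i 𝓡 𝓡' x y) (hSP : StrategyProof 𝓡 f)
    (hD : Dictatorship 𝓡' f i) (hy : y ∉ scrRange 𝓡' f) (hT : InDomain 𝓡 T)
    (hyT : y ∈ optionSet f i T (𝓡 i)) {c : X} (hc : c ∈ scrRange 𝓡' f) :
    ∃ W ∈ 𝓡 i, (∀ w ∈ scrRange 𝓡' f, W y w) ∧ ∀ w ∈ scrRange 𝓡' f, c = w ∨ W c w := by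
  have hNC := H.nonConditional i
  obtain ⟨P, hP, hfP⟩ := hyT
  have hPy : ∀ w ∈ scrRange 𝓡' f, P y w := fun w hw =>
    (hNC.isStrictTotalOrder hP).rel_of_not_rel (fun h => hy (h ▸ hw))
      (by simpa [hfP] using H.not_rel_of_dictatorship hSP hD (hT.update hP) hw)
  obtain ⟨Pc, hPc, htop⟩ := hD.exists_top hc
  obtain ⟨W, hW, hWy, hWc⟩ := hNC.exists_two_tops ⟨P, hP⟩ (m₁ := y) (A₁ := {c}) (m₂ := c)
    (A₂ := scrRange 𝓡' f \ {c})
    (by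
      rintro d (rfl | ⟨hd, -⟩)
      exacts [hNC.ne_and_notMem_fixedPairs hP (hPy d hc),
        hNC.ne_and_notMem_fixedPairs hP (hPy d hd)])
    (fun d ⟨hd, hdc⟩ => hNC.ne_and_notMem_fixedPairs (H.subset i hPc)
      ((htop d hd).resolve_left (Ne.symm hdc)))
  have hWc' : ∀ w ∈ scrRange 𝓡' f, c = w ∨ W c w := fun w hw =>
    (eq_or_ne c w).imp id fun hcw => hWc w ⟨hw, hcw.symm⟩
  refine ⟨W, hW, fun w hw => ?_, hWc'⟩
  rcases hWc' w hw with rfl | hcw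
  · exact hWy c rfl
  · exact (hNC.isStrictTotalOrder hW).trans _ _ _ (hWy c rfl) hcw

lemma rel_of_pivot (H : InductionStep i 𝓡 𝓡' x y) (hSP : StrategyProof 𝓡 f)
    (hD : Dictatorship 𝓡' f i) (hy : y ∉ scrRange 𝓡' f) (hT : InDomain 𝓡 T) {j : N} (hji : j ≠ i)
    {P : Pref X} (hP : P ∈ 𝓡 j) (h₁ : y ∈ optionSet f i T (𝓡 i))
    (h₂ : y ∉ optionSet f i (update T j P) (𝓡 i)) {c : X} (hc : c ∈ scrRange 𝓡' f) :
    T j y c ∧ P c y := by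
  obtain ⟨W, hW, hWy, htop⟩ := H.exists_y_above_top hSP hD hy hT h₁ hc
  -- with `i` reporting `W`, agent `j` switches the outcome between `y` and `c`
  have hf₁ : f (update T i W) = y := H.apply_update_eq_y_of_mem_optionSet hSP hD hT h₁ hW hWy
  have hf₂ : f (update (update T j P) i W) = c :=
    H.apply_update_eq_of_notMem_optionSet hSP hD (hT.update hP) h₂ hW hc htop
  have hcomm : update (update T j P) i W = update (update T i W) j P := update_comm hji P W T
  have hcy : c ≠ y := fun h => hy (h ▸ hc)
  constructor
  · refine (H.isStrictTotalOrder j (hT j)).rel_of_not_rel hcy ?_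
    have := hSP _ (hT.update hW) j P hP
    rwa [← hcomm, hf₁, hf₂, update_of_ne hji] at this
  · refine (H.isStrictTotalOrder j hP).rel_of_not_rel hcy.symm ?_
    have hback : update (update T i W) j (T j) = update T i W :=
      update_eq_self_iff.2 (update_of_ne hji _ _).symm
    have := hSP _ ((hT.update hP).update hW) j (T j) (hT j)
    rwa [hcomm, update_idem, hback, hf₁, update_self, ← hcomm, hf₂] at this

lemma false_of_pivot [Fintype X] (H : InductionStep i 𝓡 𝓡' x y) (hSP : StrategyProof 𝓡 f)
    (hD : Dictatorship 𝓡' f i) (hcard' : 2 ≤ (scrRange 𝓡' f).ncard) (hy : y ∉ scrRange 𝓡' f)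
    (hT : InDomain 𝓡 T) {j : N} (hji : j ≠ i) {P : Pref X} (hP : P ∈ 𝓡 j)
    (h₁ : y ∈ optionSet f i T (𝓡 i)) (h₂ : y ∉ optionSet f i (update T j P) (𝓡 i)) : False := by
  have hNC := H.nonConditional j
  obtain ⟨a, ha, b, hb, hab, hba⟩ : ∃ a ∈ scrRange 𝓡' f, ∃ b ∈ scrRange 𝓡' f, a ≠ b ∧
      (b, a) ∉ fixedPairs (𝓡 j) := by
    obtain ⟨c₁, hc₁, c₂, hc₂, hne⟩ := (one_lt_ncard (toFinite _)).1 hcard'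
    by_cases h : (c₂, c₁) ∈ fixedPairs (𝓡 j)
    · exact ⟨c₂, hc₂, c₁, hc₁, hne.symm, (hNC.ne_and_notMem_fixedPairs hP (h.2 P hP)).2⟩
    · exact ⟨c₁, hc₁, c₂, hc₂, hne, h⟩
  obtain ⟨P', hP', hP'a, hP'y⟩ := hNC.exists_two_tops ⟨P, hP⟩ (m₁ := a) (A₁ := {y}) (m₂ := y)
    (A₂ := {b})
    (by
      rintro d (rfl | rfl)
      exacts [hNC.ne_and_notMem_fixedPairs hP (H.rel_of_pivot hSP hD hy hT hji hP h₁ h₂ ha).2,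
        ⟨hab.symm, hba⟩])
    (by
      rintro d rfl
      exact hNC.ne_and_notMem_fixedPairs (hT j) (H.rel_of_pivot hSP hD hy hT hji hP h₁ h₂ hb).1)
  -- `P'` ranks `a` over `y` over `b`, against `rel_of_pivot` for the switch `P' → P` or `T j → P'`
  have hP'sto := hNC.isStrictTotalOrder hP'
  by_cases h₃ : y ∈ optionSet f i (update T j P') (𝓡 i)
  · have := (H.rel_of_pivot hSP hD hy (hT.update hP') hji hP h₃ (by rwa [update_idem]) ha).1
    exact hP'sto.not_rel_of_rel (hP'a y rfl) (by simpa using this)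
  · exact hP'sto.not_rel_of_rel (hP'y b rfl) (H.rel_of_pivot hSP hD hy hT hji hP' h₁ h₃ hb).2

lemma not_dictatorship_self [Fintype N] [Fintype X] (H : InductionStep i 𝓡 𝓡' x y)
    (hSP : StrategyProof 𝓡 f) (hND : NonDictatorial 𝓡 f) (hcard' : 2 ≤ (scrRange 𝓡' f).ncard) :
    ¬ Dictatorship 𝓡' f i := by
  intro hD
  have hx : x ∈ scrRange 𝓡' f := by
    by_contra hx
    exact hND i (H.dictatorship_of_x_notMem hSP hD hx)
  have hy := H.y_notMem_scrRange_of_x_mem hD hx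
  obtain ⟨R, R', hR, hR', hyR', hyR⟩ := H.exists_y_mem_optionSet_notMem hSP hD (hND i)
  obtain ⟨T, hT, j, h₁, h₂⟩ := exists_pivot (p := fun T => y ∈ optionSet f i T (𝓡 i))
    hR hR' hyR' hyR
  have hji : j ≠ i := by
    rintro rfl
    exact h₂ (by rwa [optionSet_update])
  exact H.false_of_pivot hSP hD hcard' hy hT hji (hR j) h₁ h₂

end InductionStep

end

theorem statement9_general {N X : Type*} [Fintype N] [Fintype X] [DecidableEq N]
    (i : N) (𝓡 𝓡' : N → Set (Pref X))
    (hAgree : ∀ j, j ≠ i → 𝓡' j = 𝓡 j)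
    (hNC : ∀ j, NonConditional (𝓡 j)) (hNC' : NonConditional (𝓡' i))
    (x y : X)
    (hxy : (x, y) ∈ fixedPairs (𝓡' i))
    (hS : fixedPairs (𝓡 i) = fixedPairs (𝓡' i) \ {(x, y)})
    (f : (N → Pref X) → X) (hSP : StrategyProof 𝓡 f)
    (hND : NonDictatorial 𝓡 f) (hcard : (scrRange 𝓡 f).ncard ≠ 2)
    (hcard' : 2 ≤ (scrRange 𝓡' f).ncard) :
    ∀ j, ¬ Dictatorship 𝓡' f j := by
  obtain ⟨-, R, hR, -⟩ := nonempty_of_ncard_ne_zero (s := scrRange 𝓡' f) (by omega)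
  have H : InductionStep i 𝓡 𝓡' x y := ⟨hAgree, hNC, hNC', hxy, hS, ⟨R i, hR i⟩⟩
  intro j
  rcases eq_or_ne j i with rfl | hji
  · exact H.not_dictatorship_self hSP hND hcard'
  · exact H.not_dictatorship_of_ne hSP hND hcard hcard' hji

theorem statement9 {N X : Type*} [Fintype N] [Nonempty N] [Fintype X] [DecidableEq N]
    (i : N) (𝓡 𝓡' : N → Set (Pref X))
    (hAgree : ∀ j, j ≠ i → 𝓡' j = 𝓡 j)
    (hNC : ∀ j, NonConditional (𝓡 j)) (hNC' : NonConditional (𝓡' i))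
    (hss : 𝓡' i ⊂ 𝓡 i) (x y : X)
    (hxy : (x, y) ∈ fixedPairs (𝓡' i))
    (hS : fixedPairs (𝓡 i) = fixedPairs (𝓡' i) \ {(x, y)})
    (hnoz : ¬ ∃ z, (x, z) ∈ fixedPairs (𝓡' i) ∧ (z, y) ∈ fixedPairs (𝓡' i))
    (f : (N → Pref X) → X) (hSP : StrategyProof 𝓡 f)
    (hND : NonDictatorial 𝓡 f) (hcard : (scrRange 𝓡 f).ncard ≠ 2)
    (hcard' : 2 ≤ (scrRange 𝓡' f).ncard) :
    ∀ j, ¬ Dictatorship 𝓡' f j :=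
  statement9_general i 𝓡 𝓡' hAgree hNC hNC' x y hxy hS f hSP hND hcard hcard'
end
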